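/- Let R be a Gorenstein ring and M a maximal Cohen–Macaulay R-module. Then ca_R^1(M) = ca_R(M). -/

import Mathlib

open CategoryTheory

noncomputable section

universe u

variable (R : Type u) [CommRing R]

/-- The `n`-th Ext group of two `R`-modules, as an `R`-module. -/
abbrev ExtM (n : ℕ) (M N : ModuleCat.{u} R) : ModuleCat.{u} R :=
  ((Ext R (ModuleCat.{u} R) n).obj (Opposite.op M)).obj N

/-- The `n`-th cohomological annihilator of a module `M`:
elements `r` with `r • Ext^i(M, N) = 0` for all `i ≥ n` and all finitely generated `N`. -/
def caN (n : ℕ) (M : ModuleCat.{u} R) : Ideal R where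
  carrier := {r | ∀ i, n ≤ i → ∀ N : ModuleCat.{u} R, Module.Finite R N →
    ∀ x : ExtM R i M N, r • x = 0}
  zero_mem' := by intro i _ N _ x; simp
  add_mem' := by
    intro a b ha hb i hi N hN x
    rw [add_smul, ha i hi N hN x, hb i hi N hN x, add_zero]
  smul_mem' := by
    intro c r hr i hi N hN x
    simp only [smul_eq_mul, mul_smul, hr i hi N hN x, smul_zero]

/-- The cohomological annihilator `ca_R(M) = ⋃ₙ ca_R^n(M)`. -/
def ca (M : ModuleCat.{u} R) : Set R := ⋃ n : ℕ, (caN R n M : Set R)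

/-- The `n`-th co-cohomological annihilator of a module `M`. -/
def cocaN (n : ℕ) (M : ModuleCat.{u} R) : Ideal R where
  carrier := {r | ∀ i, n ≤ i → ∀ N : ModuleCat.{u} R, Module.Finite R N →
    ∀ x : ExtM R i N M, r • x = 0}
  zero_mem' := by intro i _ N _ x; simp
  add_mem' := by
    intro a b ha hb i hi N hN x
    rw [add_smul, ha i hi N hN x, hb i hi N hN x, add_zero]
  smul_mem' := by
    intro c r hr i hi N hN x
    simp only [smul_eq_mul, mul_smul, hr i hi N hN x, smul_zero]

/-- The co-cohomological annihilator `coca_R(M) = ⋃ₙ coca_R^n(M)`. -/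
def coca (M : ModuleCat.{u} R) : Set R := ⋃ n : ℕ, (cocaN R n M : Set R)

/-- `M` has projective dimension at most `n`: `Ext^i(M, -) = 0` for all `i > n`. -/
def projDimLE (n : ℕ) (M : ModuleCat.{u} R) : Prop :=
  ∀ i : ℕ, n < i → ∀ N : ModuleCat.{u} R, Subsingleton (ExtM R i M N)

/-- `M` has injective dimension at most `n`: `Ext^i(-, M) = 0` for all `i > n`. -/
def injDimLE (n : ℕ) (M : ModuleCat.{u} R) : Prop :=
  ∀ i : ℕ, n < i → ∀ N : ModuleCat.{u} R, Subsingleton (ExtM R i N M)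

/-- `K` is an `n`-th syzygy of `M` with respect to resolutions by
finitely generated projective modules. -/
def IsSyz : ℕ → ModuleCat.{u} R → ModuleCat.{u} R → Prop
  | 0, M, K => Nonempty (K ≃ₗ[R] M)
  | n + 1, M, K => ∃ (L P : ModuleCat.{u} R), IsSyz n M L ∧
      Module.Finite R P ∧ Module.Projective R P ∧
      ∃ f : P →ₗ[R] L, Function.Surjective f ∧ Nonempty (K ≃ₗ[R] LinearMap.ker f)

/-- `X` is a direct summand of `Y`. -/
def IsSummand (X Y : ModuleCat.{u} R) : Prop :=
  ∃ (i : X →ₗ[R] Y) (p : Y →ₗ[R] X), p.comp i = LinearMap.id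

/-- `X` is a direct summand of a finite direct sum of copies of `G`. -/
def IsSummandOfCopies (G X : ModuleCat.{u} R) : Prop :=
  ∃ k : ℕ, IsSummand R X (ModuleCat.of R (Fin k → G))

/-- The subcategories `thickⁿ(G)` of `mod R`. -/
def thickN (G : ModuleCat.{u} R) : ℕ → Set (ModuleCat.{u} R)
  | 0 => {X | Subsingleton X}
  | n + 1 => {X | ∃ (Y Y₁ Y₂ : ModuleCat.{u} R) (f : Y₁ →ₗ[R] Y) (g : Y →ₗ[R] Y₂),
      Function.Injective f ∧ Function.Surjective g ∧ LinearMap.ker g = LinearMap.range f ∧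
      ((Y₁ ∈ thickN G n ∧ IsSummandOfCopies R G Y₂) ∨
        (IsSummandOfCopies R G Y₁ ∧ Y₂ ∈ thickN G n)) ∧
      IsSummand R X Y}

/-- The balls `|G|ₙ` of Dao–Takahashi. -/
def ballN (G : ModuleCat.{u} R) : ℕ → Set (ModuleCat.{u} R)
  | 0 => {X | Subsingleton X}
  | n + 1 => {Y | ∃ (Y' Y₁ Y₂ : ModuleCat.{u} R)
      (f : Y₁ →ₗ[R] (ModuleCat.of R (Y × Y'))) (g : (ModuleCat.of R (Y × Y')) →ₗ[R] Y₂),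
      Function.Injective f ∧ Function.Surjective g ∧ LinearMap.ker g = LinearMap.range f ∧
      Y₁ ∈ ballN G n ∧ IsSummandOfCopies R G Y₂}

/-- A regular local ring: a Noetherian local ring whose maximal ideal can be
generated by `dim R` elements. -/
def IsRegularLocal (A : Type u) [CommRing A] [IsLocalRing A] : Prop :=
  IsNoetherianRing A ∧ ∃ s : Finset A, Ideal.span (↑s : Set A) = IsLocalRing.maximalIdeal A ∧
    (s.card : WithBot ℕ∞) = ringKrullDim A

/-- The localization of a module at a prime, as a module category object over the local ring. -/
abbrev locMod (p : PrimeSpectrum R) (M : ModuleCat.{u} R) :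
    ModuleCat.{u} (Localization.AtPrime p.asIdeal) :=
  ModuleCat.of (Localization.AtPrime p.asIdeal) (LocalizedModule p.asIdeal.primeCompl M)

/-- Depth of a module over a local ring, via vanishing of `Ext` from the residue field. -/
def depthE (A : Type u) [CommRing A] [IsLocalRing A] (N : ModuleCat.{u} A) : ℕ∞ :=
  sInf ((fun n : ℕ => (n : ℕ∞)) ''
    {n : ℕ | ¬ Subsingleton (ExtM A n (ModuleCat.of A (IsLocalRing.ResidueField A)) N)})

/-- The large restricted flat dimension of `M`. -/
def rfdE (M : ModuleCat.{u} R) : ℕ∞ :=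
  ⨆ p : PrimeSpectrum R,
    (depthE (Localization.AtPrime p.asIdeal)
        (ModuleCat.of (Localization.AtPrime p.asIdeal) (Localization.AtPrime p.asIdeal)) -
      depthE (Localization.AtPrime p.asIdeal) (locMod R p M))

/-- `r • f` factors through a finitely generated projective module. -/
def FactorsThroughProj (M : ModuleCat.{u} R) (f : M →ₗ[R] M) : Prop :=
  ∃ P : ModuleCat.{u} R, Module.Projective R P ∧ Module.Finite R P ∧
    ∃ (g : M →ₗ[R] P) (h : P →ₗ[R] M), h.comp g = f

/-- The annihilator of the stable endomorphism ring of `M`. -/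
def annStableEnd (M : ModuleCat.{u} R) : Set R :=
  {r | ∀ f : M →ₗ[R] M, FactorsThroughProj R M (r • f)}

/-- A resolving subcategory of `mod R`. -/
def IsResolving (C : Set (ModuleCat.{u} R)) : Prop :=
  (∀ P : ModuleCat.{u} R, Module.Finite R P → Module.Projective R P → P ∈ C) ∧
  (∀ X Y : ModuleCat.{u} R, Y ∈ C → IsSummand R X Y → X ∈ C) ∧
  (∀ (Y Y₁ Y₂ : ModuleCat.{u} R) (f : Y₁ →ₗ[R] Y) (g : Y →ₗ[R] Y₂),
    Function.Injective f → Function.Surjective g → LinearMap.ker g = LinearMap.range f →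
    Y₁ ∈ C → Y₂ ∈ C → Y ∈ C) ∧
  (∀ X ∈ C, ∀ K : ModuleCat.{u} R, IsSyz R 1 X K → K ∈ C)

/-- The smallest resolving subcategory containing `G`. -/
def resCl (G : ModuleCat.{u} R) : Set (ModuleCat.{u} R) :=
  ⋂₀ {C | IsResolving R C ∧ G ∈ C}

end

/-! Dimension shifting. Write a finitely generated `N` as `0 → K → Rᵏ → N → 0`, with `K` finitely
generated because `R` is Noetherian. As `Ext^i(M, R) = 0` for `i > 0`, also `Ext^i(M, Rᵏ) = 0`,
so the connecting map `Ext^i(M, N) → Ext^(i+1)(M, K)` is injective for `i ≥ 1`: an element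
killing `Ext^(≥ n+1)(M, -)` kills `Ext^(≥ n)(M, -)` as long as `n ≥ 1`. The long exact sequence
comes from the Hom complex out of a projective resolution of `M`, which is exact in the second
variable because the resolution consists of projectives. -/

open CategoryTheory Limits

universe v w

namespace CategoryTheory.Functor

lemma isZero_obj_biproduct {C D : Type*} [Category C] [Category D] [Preadditive C]
    [Preadditive D] (F : C ⥤ D) [F.Additive] {J : Type} [Fintype J] (f : J → C)
    [HasBiproduct f] (h : ∀ j, IsZero (F.obj (f j))) : IsZero (F.obj (⨁ f)) := by
  rw [IsZero.iff_id_eq_zero, ← F.map_id, ← biproduct.total, F.map_sum]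
  refine Finset.sum_eq_zero fun j _ => ?_
  rw [F.map_comp, (h j).eq_of_tgt (F.map (biproduct.π f j)) 0, zero_comp]

lemma isZero_obj_pi {R : Type*} [CommRing R] {D : Type*} [Category D]
    [Preadditive D] (F : ModuleCat.{v} R ⥤ D) [F.Additive] {J : Type} [Fintype J]
    (f : J → ModuleCat.{v} R) (h : ∀ j, IsZero (F.obj (f j))) :
    IsZero (F.obj (ModuleCat.of R (∀ j, f j))) :=
  (F.isZero_obj_biproduct f h).of_iso (F.mapIso (ModuleCat.biproductIsoPi f).symm)

end CategoryTheory.Functor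

section HomComplex

variable {R : Type*} [CommRing R] {C : Type w} [Category.{v} C] [Abelian C] [Linear R C]

variable (R) in
def homComplexFunctor (X : ChainComplex C ℕ) : C ⥤ CochainComplex (ModuleCat.{v} R) ℕ where
  obj Y := X.linearYonedaObj R Y
  map f :=
    { f j := ((linearCoyoneda R C).obj (Opposite.op (X.X j))).map f
      comm' i j _ := ((linearCoyoneda R C).map (X.d j i).op).naturality f }
  map_id Y := by ext j : 1; exact ((linearCoyoneda R C).obj _).map_id Y
  map_comp f g := by ext j : 1; exact ((linearCoyoneda R C).obj _).map_comp f g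

instance (X : ChainComplex C ℕ) : (homComplexFunctor R X).Additive where
  map_add {_ _ f g} := by ext j : 1; exact ((linearCoyoneda R C).obj _).map_add

lemma shortExact_map_linearCoyoneda_of_projective {S : ShortComplex C} (hS : S.ShortExact)
    (P : C) [Projective P] :
    (S.map ((linearCoyoneda R C).obj (Opposite.op P))).ShortExact := by
  have := hS.mono_f
  have := hS.epi_g
  refine
    { exact := (ShortComplex.moduleCat_exact_iff _).2 fun u hu =>
        ⟨hS.exact.lift u hu, hS.exact.lift_f u hu⟩
      mono_f := (ModuleCat.mono_iff_injective _).2 fun u v h => (cancel_mono S.f).1 h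
      epi_g := (ModuleCat.epi_iff_surjective _).2 fun u =>
        ⟨Projective.factorThru u S.g, Projective.factorThru_comp u S.g⟩ }

lemma homComplexFunctor_map_shortExact (X : ChainComplex C ℕ) [∀ j, Projective (X.X j)]
    {S : ShortComplex C} (hS : S.ShortExact) :
    (S.map (homComplexFunctor R X)).ShortExact :=
  HomologicalComplex.shortExact_of_degreewise_shortExact _ fun j =>
    shortExact_map_linearCoyoneda_of_projective hS (X.X j)

end HomComplex

section DimensionShift

variable {R : Type u} [CommRing R]

lemma exists_injective_ext_succ [IsNoetherianRing R] {M : ModuleCat.{u} R}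
    (hM : ∀ i, 0 < i → Subsingleton (ExtM R i M (ModuleCat.of R R)))
    (N : ModuleCat.{u} R) [Module.Finite R N] {i : ℕ} (hi : 0 < i) :
    ∃ K : ModuleCat.{u} R, Module.Finite R K ∧
      ∃ φ : ExtM R i M N →ₗ[R] ExtM R (i + 1) M K, Function.Injective φ := by
  obtain ⟨k, π, hπ⟩ := Module.Finite.exists_fin' R N
  let P := projectiveResolution M
  have hS := homComplexFunctor_map_shortExact (R := R) P.complex
    (LinearMap.shortExact_shortComplexKer hπ)
  have hR : IsZero (((homComplexFunctor R P.complex).obj (ModuleCat.of R R)).homology i) := by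
    have := hM i hi
    exact (ModuleCat.isZero_of_subsingleton _).of_iso (P.isoExt i _).symm
  have hfree : IsZero (((homComplexFunctor R P.complex).obj
      (ModuleCat.of R (Fin k → R))).homology i) :=
    (homComplexFunctor R P.complex ⋙ HomologicalComplex.homologyFunctor _ _ i).isZero_obj_pi
      (fun _ => ModuleCat.of R R) fun _ => hR
  have hδ : Mono (hS.δ i (i + 1) rfl) :=
    (hS.homology_exact₃ i (i + 1) rfl).mono_g (hfree.eq_of_src _ _)
  exact ⟨ModuleCat.of R (LinearMap.ker π), inferInstance,
    ((P.isoExt i N).hom ≫ hS.δ i (i + 1) rfl ≫ (P.isoExt (i + 1) _).inv).hom,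
    (P.isoExt (i + 1) _).toLinearEquiv.symm.injective.comp <|
      ((ModuleCat.mono_iff_injective _).1 hδ).comp (P.isoExt i N).toLinearEquiv.injective⟩

lemma caN_mono (M : ModuleCat.{u} R) : Monotone (caN R · M) :=
  fun _ _ hmn _ hr i hi => hr i (hmn.trans hi)

lemma caN_succ_le_caN [IsNoetherianRing R] {M : ModuleCat.{u} R}
    (hM : ∀ i, 0 < i → Subsingleton (ExtM R i M (ModuleCat.of R R))) {n : ℕ} (hn : 0 < n) :
    caN R (n + 1) M ≤ caN R n M := by
  intro r hr i hi N hN x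
  obtain ⟨K, hK, φ, hφ⟩ := exists_injective_ext_succ hM N (hn.trans_le hi)
  apply hφ
  rw [map_smul, hr (i + 1) (Nat.succ_le_succ hi) K hK, map_zero]

lemma caN_le_caN_one [IsNoetherianRing R] {M : ModuleCat.{u} R}
    (hM : ∀ i, 0 < i → Subsingleton (ExtM R i M (ModuleCat.of R R))) :
    ∀ n, caN R n M ≤ caN R 1 M
  | 0 => caN_mono M zero_le_one
  | 1 => le_rfl
  | n + 2 => (caN_succ_le_caN hM n.succ_pos).trans (caN_le_caN_one hM (n + 1))

end DimensionShift

theorem stmt17_general (R : Type u) [CommRing R] [IsNoetherianRing R]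
    (M : ModuleCat.{u} R)
    (hMCM : ∀ i : ℕ, 0 < i → Subsingleton (ExtM R i M (ModuleCat.of R R))) :
    (caN R 1 M : Set R) = ca R M :=
  (Set.subset_iUnion (fun n => (caN R n M : Set R)) 1).antisymm
    (Set.iUnion_subset fun n => caN_le_caN_one hMCM n)

/-- over a Gorenstein ring, `ca_R^1(M) = ca_R(M)` for `M` maximal
Cohen–Macaulay. -/
theorem stmt17 (R : Type u) [CommRing R] [IsNoetherianRing R]
    (hGor : ∀ p : PrimeSpectrum R, ∃ n : ℕ,
      injDimLE (Localization.AtPrime p.asIdeal) n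
        (ModuleCat.of (Localization.AtPrime p.asIdeal) (Localization.AtPrime p.asIdeal)))
    (M : ModuleCat.{u} R) [Module.Finite R M]
    (hMCM : ∀ i : ℕ, 0 < i → Subsingleton (ExtM R i M (ModuleCat.of R R))) :
    (caN R 1 M : Set R) = ca R M :=
  stmt17_general R M hMCM
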